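/- Let M be a p×q pattern matrix and N a q×s pattern matrix. If each column of M has exactly one entry equal to * and all other entries equal to 0, then P(M)P(N) = P(MN). -/

import Mathlib

inductive PSym | zero | star | any
deriving DecidableEq

namespace PSym

def symAdd : PSym → PSym → PSym
  | zero, x => x
  | x, zero => x
  | _, _ => any

def symMul : PSym → PSym → PSym
  | zero, _ => zero
  | _, zero => zero
  | star, star => star
  | _, _ => any

instance : Zero PSym := ⟨zero⟩
instance : Add PSym := ⟨symAdd⟩

instance : AddCommMonoid PSym where
  add_assoc a b c := by cases a <;> cases b <;> cases c <;> rfl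
  zero_add a := by cases a <;> rfl
  add_zero a := by cases a <;> rfl
  add_comm a b := by cases a <;> cases b <;> rfl
  nsmul := nsmulRec

end PSym

/-- The pattern class of a pattern matrix. -/
def PatClass {p q : Type*} (M : Matrix p q PSym) : Set (Matrix p q ℝ) :=
  {A | ∀ i j, (M i j = PSym.zero → A i j = 0) ∧ (M i j = PSym.star → A i j ≠ 0)}

/-- Product of pattern matrices. -/
def patMul {p q s : ℕ} (M : Matrix (Fin p) (Fin q) PSym) (N : Matrix (Fin q) (Fin s) PSym) :
    Matrix (Fin p) (Fin s) PSym :=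
  fun i j => ∑ k, PSym.symMul (M i k) (N k j)

/-- A 1×q pattern vector `M` is independent of an r×q pattern matrix `N`. -/
def Independent {q r : ℕ} (M : Matrix (Fin 1) (Fin q) PSym) (N : Matrix (Fin r) (Fin q) PSym) : Prop :=
  ∀ M₀ ∈ PatClass M, ∀ N₀ ∈ PatClass N, ∀ (z₁ : ℝ) (z₂ : Fin r → ℝ),
    (∀ j, z₁ * M₀ 0 j + ∑ i, z₂ i * N₀ i j = 0) → z₁ = 0

/-!
Entrywise, `P(MN)` is the pattern class of a sum of products of symbols. Products of symbols
are realized by products of reals, and the pattern class of a sum of symbols is exactly the set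
of sums of realizations: a real number can always be split into two nonzero summands. The first
fact gives `P(M)P(N) ⊆ P(MN)` for all `M`, `N`. For the converse, write each `X i j` as a sum
over `k` of realizations of `M i k · N k j`. If the only `*` of column `k` of `M` sits in row
`r k`, take for `A` the `0/1` matrix of `M` and put `B k j` equal to the `k`-th summand chosen
for `X (r k) j`; the summands chosen for the other rows are forced to vanish.
-/

namespace PSym

/-- `a.Realizes x` says that `x ∈ P(a)`, the pattern class of a single symbol. -/
def Realizes (a : PSym) (x : ℝ) : Prop :=
  (a = zero → x = 0) ∧ (a = star → x ≠ 0)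

variable {a b : PSym} {x y z : ℝ}

lemma realizes_zero_iff : zero.Realizes x ↔ x = 0 :=
  ⟨fun h => h.1 rfl, fun h => ⟨fun _ => h, nofun⟩⟩

lemma add_def : a + b = symAdd a b := rfl

lemma symMul_zero_left (b : PSym) : symMul zero b = zero := rfl

lemma symMul_star_left (b : PSym) : symMul star b = b := by
  cases b <;> rfl

lemma Realizes.add (ha : a.Realizes x) (hb : b.Realizes y) : (a + b).Realizes (x + y) := by
  obtain ⟨ha0, has⟩ := ha
  obtain ⟨hb0, hbs⟩ := hb
  cases a <;> cases b <;> simp_all [Realizes, add_def, symAdd]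

lemma Realizes.symMul (ha : a.Realizes x) (hb : b.Realizes y) :
    (symMul a b).Realizes (x * y) := by
  obtain ⟨ha0, has⟩ := ha
  obtain ⟨hb0, hbs⟩ := hb
  cases a <;> cases b <;> simp_all [Realizes, PSym.symMul]

lemma realizes_sum {ι : Type*} (t : Finset ι) (f : ι → PSym) (g : ι → ℝ)
    (h : ∀ k ∈ t, (f k).Realizes (g k)) : (∑ k ∈ t, f k).Realizes (∑ k ∈ t, g k) := by
  have := Finset.sum_induction (fun k => (f k, g k)) (fun u => u.1.Realizes u.2)
    (fun _ _ hu hv => hu.add hv) (realizes_zero_iff.2 rfl) h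
  simpa only [Prod.fst_sum, Prod.snd_sum] using this

lemma exists_realizes_add (h : (a + b).Realizes z) :
    ∃ x y, a.Realizes x ∧ b.Realizes y ∧ x + y = z := by
  by_cases ha : a = zero
  · subst ha
    exact ⟨0, z, realizes_zero_iff.2 rfl, zero_add b ▸ h, zero_add z⟩
  by_cases hb : b = zero
  · subst hb
    exact ⟨z, 0, add_zero a ▸ h, realizes_zero_iff.2 rfl, add_zero z⟩
  -- `|z| + 1` is neither `0` nor `z`, so both parts are nonzero.
  refine ⟨|z| + 1, z - (|z| + 1), ⟨fun h => absurd h ha, fun _ => by positivity⟩,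
    ⟨fun h => absurd h hb, fun _ => by linarith [le_abs_self z]⟩, by ring⟩

lemma exists_realizes_sum {ι : Type*} (t : Finset ι) (f : ι → PSym)
    (h : (∑ k ∈ t, f k).Realizes x) :
    ∃ g : ι → ℝ, (∀ k ∈ t, (f k).Realizes (g k)) ∧ ∑ k ∈ t, g k = x := by
  classical
  induction t using Finset.cons_induction generalizing x with
  | empty => exact ⟨0, by simp, (realizes_zero_iff.1 h).symm⟩
  | cons a t ha ih =>
    rw [Finset.sum_cons] at h
    obtain ⟨y, w, hy, hw, rfl⟩ := exists_realizes_add h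
    obtain ⟨g, hg, rfl⟩ := ih hw
    refine ⟨Function.update g a y, ?_, ?_⟩
    · intro k hk
      rcases Finset.mem_cons.1 hk with rfl | hk
      · simpa using hy
      · simpa [ne_of_mem_of_not_mem hk ha] using hg k hk
    · rw [Finset.sum_cons, Function.update_self, Finset.sum_update_of_notMem ha]

end PSym

theorem mul_mem_patClass_patMul {p q s : ℕ} {M : Matrix (Fin p) (Fin q) PSym}
    {N : Matrix (Fin q) (Fin s) PSym} {A : Matrix (Fin p) (Fin q) ℝ} {B : Matrix (Fin q) (Fin s) ℝ}
    (hA : A ∈ PatClass M) (hB : B ∈ PatClass N) : A * B ∈ PatClass (patMul M N) :=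
  fun i j => PSym.realizes_sum _ _ _ fun k _ => PSym.Realizes.symMul (hA i k) (hB k j)

theorem exists_mul_eq_of_mem_patClass_patMul {p q s : ℕ} {M : Matrix (Fin p) (Fin q) PSym}
    {N : Matrix (Fin q) (Fin s) PSym} {X : Matrix (Fin p) (Fin s) ℝ}
    (hM : ∀ k : Fin q, (∃! i : Fin p, M i k = PSym.star) ∧
      ∀ i : Fin p, M i k ≠ PSym.star → M i k = PSym.zero)
    (hX : X ∈ PatClass (patMul M N)) :
    ∃ A ∈ PatClass M, ∃ B ∈ PatClass N, X = A * B := by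
  choose r hr hr_unique using fun k => (hM k).1
  choose g hg hg_sum using fun i j =>
    PSym.exists_realizes_sum Finset.univ (fun k => PSym.symMul (M i k) (N k j)) (hX i j)
  refine ⟨Matrix.of fun i k => if M i k = PSym.star then 1 else 0, fun i k => ?_,
    Matrix.of fun k j => g (r k) j k, fun k j => ?_, ?_⟩
  · show (M i k).Realizes (if M i k = PSym.star then 1 else 0)
    split_ifs with h
    · rw [h]
      exact ⟨nofun, fun _ => one_ne_zero⟩
    · rw [(hM k).2 i h]
      exact PSym.realizes_zero_iff.2 rfl
  · show (N k j).Realizes (g (r k) j k)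
    simpa only [hr, PSym.symMul_star_left] using hg (r k) j k (Finset.mem_univ k)
  · ext i j
    rw [Matrix.mul_apply, ← hg_sum]
    refine Finset.sum_congr rfl fun k hk => ?_
    simp only [Matrix.of_apply]
    split_ifs with h
    · rw [one_mul, hr_unique k i h]
    · have := hg i j k hk
      rw [(hM k).2 i h, PSym.symMul_zero_left] at this
      rw [zero_mul, PSym.realizes_zero_iff.1 this]

/-- If each column of `M` has exactly one `*` entry and all other
entries `0`, then `P(M)P(N) = P(MN)`. -/
theorem pattern_class_mul_of_cols {p q s : ℕ}
    (M : Matrix (Fin p) (Fin q) PSym) (N : Matrix (Fin q) (Fin s) PSym)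
    (hM : ∀ k : Fin q, (∃! i : Fin p, M i k = PSym.star) ∧
      ∀ i : Fin p, M i k ≠ PSym.star → M i k = PSym.zero) :
    {X : Matrix (Fin p) (Fin s) ℝ | ∃ A ∈ PatClass M, ∃ B ∈ PatClass N, X = A * B} =
      PatClass (patMul M N) := by
  ext X
  exact ⟨fun ⟨A, hA, B, hB, hX⟩ => hX ▸ mul_mem_patClass_patMul hA hB,
    exists_mul_eq_of_mem_patClass_patMul hM⟩
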